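/- Backward-pass flow conservation: consider the sub-DAG of a smooth, decomposable, alternating PC induced by nodes whose scope contains a fixed variable X_i, with backward values defined by bk(root) = 1, bk(n) = Σ_{m ∈ pa(n)} (θ_{m,n} · fw(n)/fw(m)) · bk(m) for product nodes n, and bk(n) = Σ_{m ∈ pa(n)} bk(m) for sum and input nodes n (parents taken within the sub-DAG). Assume all forward values fw are strictly positive. Then the sum of backward values over all input nodes whose variable is X_i equals 1. -/

import Mathlib

open scoped Classical
open Finset

/-- Kinds of nodes of a probabilistic circuit DAG. -/
inductive NodeKind (d C : ℕ) : Type where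
  | input (i : Fin d) (f : Fin C → ℝ)
  | sum
  | prod

/-- A probabilistic circuit represented as a DAG: nodes are `Fin n`, `edge p c` means `c` is
a child of `p`, `θ` are sum-edge parameters, edges go from larger to smaller indices
(acyclicity), and `root` is a designated root node. -/
structure PCDag (d C : ℕ) where
  n : ℕ
  kind : Fin n → NodeKind d C
  edge : Fin n → Fin n → Prop
  θ : Fin n → Fin n → ℝ
  topo : ∀ p c, edge p c → (c : ℕ) < (p : ℕ)
  root : Fin n

namespace PCDag

variable {d C : ℕ}

noncomputable def children (G : PCDag d C) (v : Fin G.n) : Finset (Fin G.n) :=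
  Finset.univ.filter fun c => G.edge v c

noncomputable def parents (G : PCDag d C) (v : Fin G.n) : Finset (Fin G.n) :=
  Finset.univ.filter fun p => G.edge p v

def IsSum (G : PCDag d C) (v : Fin G.n) : Prop := G.kind v = NodeKind.sum
def IsProd (G : PCDag d C) (v : Fin G.n) : Prop := G.kind v = NodeKind.prod
def IsInputOn (G : PCDag d C) (v : Fin G.n) (i : Fin d) : Prop :=
  ∃ f, G.kind v = NodeKind.input i f
def IsInput (G : PCDag d C) (v : Fin G.n) : Prop := ∃ i, G.IsInputOn v i

/-- The pmf attached to an input node (junk value `0` on non-input nodes). -/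
noncomputable def inputF (G : PCDag d C) (v : Fin G.n) : Fin C → ℝ :=
  match G.kind v with
  | NodeKind.input _ f => f
  | _ => 0

/-- `scope` is the scope function of the DAG: variables of descendant input nodes. -/
def ScopeFun (G : PCDag d C) (scope : Fin G.n → Finset (Fin d)) : Prop :=
  ∀ v, scope v =
    match G.kind v with
    | NodeKind.input i _ => {i}
    | _ => (G.children v).biUnion scope

/-- `fw` is the soft-evidence forward pass with weight functions `w`: an input node on `X i`
outputs `Σ_x f x * w i x`, product nodes multiply their children's values, and sum nodes
take the `θ`-weighted sums of their children's values. -/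
def FwFun (G : PCDag d C) (w : Fin d → Fin C → ℝ) (fw : Fin G.n → ℝ) : Prop :=
  ∀ v, fw v =
    match G.kind v with
    | NodeKind.input i f => ∑ x, f x * w i x
    | NodeKind.prod => ∏ c ∈ G.children v, fw c
    | NodeKind.sum => ∑ c ∈ G.children v, G.θ v c * fw c

/-- `bk` is the backward pass: `bk root = 1`, for product nodes
`bk v = Σ_{m ∈ parents v} (θ m v · fw v / fw m) · bk m`, and for sum and input nodes
`bk v = Σ_{m ∈ parents v} bk m`. -/
def BkFun (G : PCDag d C) (fw bk : Fin G.n → ℝ) : Prop :=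
  ∀ v, bk v =
    if v = G.root then 1
    else
      match G.kind v with
      | NodeKind.prod => ∑ m ∈ G.parents v, (G.θ m v * fw v / fw m) * bk m
      | _ => ∑ m ∈ G.parents v, bk m

/-- `sem` is the distribution semantics of the DAG (as functions of full assignments). -/
def SemFun (G : PCDag d C) (sem : Fin G.n → (Fin d → Fin C) → ℝ) : Prop :=
  ∀ v x, sem v x =
    match G.kind v with
    | NodeKind.input i f => f (x i)
    | NodeKind.prod => ∏ c ∈ G.children v, sem c x
    | NodeKind.sum => ∑ c ∈ G.children v, G.θ v c * sem c x

/-- Smoothness: children of every sum node have the same scope. -/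
def Smooth (G : PCDag d C) (scope : Fin G.n → Finset (Fin d)) : Prop :=
  ∀ v, G.IsSum v → ∀ c₁ ∈ G.children v, ∀ c₂ ∈ G.children v, scope c₁ = scope c₂

/-- Decomposability: children of every product node have pairwise disjoint scopes. -/
def Decomposable (G : PCDag d C) (scope : Fin G.n → Finset (Fin d)) : Prop :=
  ∀ v, G.IsProd v → ∀ c₁ ∈ G.children v, ∀ c₂ ∈ G.children v,
    c₁ ≠ c₂ → Disjoint (scope c₁) (scope c₂)

/-- The PC alternates sum and product layers and all parents of input nodes are products. -/
def Alternating (G : PCDag d C) : Prop :=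
  ∀ p c, G.edge p c →
    (G.IsSum p → G.IsProd c) ∧ (G.IsProd p → G.IsSum c ∨ G.IsInput c) ∧ ¬ G.IsInput p

/-- Sum-node edge weights are nonnegative and sum to 1 over the children. -/
def ValidSumWeights (G : PCDag d C) : Prop :=
  ∀ v, G.IsSum v → (∀ c ∈ G.children v, 0 ≤ G.θ v c) ∧ ∑ c ∈ G.children v, G.θ v c = 1

/-- Every sum/product node has at least one child. -/
def InternalNonempty (G : PCDag d C) : Prop :=
  ∀ v, ¬ G.IsInput v → (G.children v).Nonempty

end PCDag

/-! Each node of the sub-DAG `S = {v | X_i ∈ scope v}` sends flow along its edges: a sum node `m`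
sends `θ m c · fw c / fw m · bk m` to its child `c`, every other node sends its whole `bk`. The
forward equation at sum nodes, smoothness, and decomposability (a product node in `S` has exactly
one child in `S`) make the outflow of each non-input node of `S` equal to its `bk`; alternation
and the backward recurrence make the inflow of each non-root node equal to its `bk`, since
parents of nodes of `S` lie in `S`. Summing both over `S` counts every edge once, so the total
`bk` of the sinks (the input nodes on `X_i`) is that of the source, `bk root = 1`. -/

theorem Finset.sum_filter_eq_of_conservation {ι M : Type*} [DecidableEq ι]
    [AddCommGroup M] (S : Finset ι) (flow : ι → ι → M) (b : ι → M) (sink : ι → Prop) [DecidablePred sink]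
    (src : ι) (hsrc : src ∈ S)
    (hout : ∀ v ∈ S, ∑ c ∈ S, flow v c = if sink v then 0 else b v)
    (hin : ∀ c ∈ S, ∑ p ∈ S, flow p c = if c = src then 0 else b c) :
    ∑ v ∈ S with sink v, b v = b src := by
  have total : ∑ v ∈ S with ¬sink v, b v = ∑ c ∈ S.erase src, b c := by
    have h := (sum_congr rfl hout).symm.trans (sum_comm.trans (sum_congr rfl hin))
    simpa only [sum_ite, sum_const_zero, zero_add, ← ne_eq, filter_ne'] using h
  have hsinks := sum_filter_add_sum_filter_not S sink b
  rw [total] at hsinks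
  exact add_right_cancel (hsinks.trans (add_sum_erase S b hsrc).symm)

namespace PCDag

variable {d C : ℕ} {G : PCDag d C} {scope : Fin G.n → Finset (Fin d)}

@[simp] theorem mem_children {v c : Fin G.n} : c ∈ G.children v ↔ G.edge v c := by
  simp [children]

@[simp] theorem mem_parents {v p : Fin G.n} : p ∈ G.parents v ↔ G.edge p v := by
  simp [parents]

theorem IsSum.not_isInput {v : Fin G.n} (hv : G.IsSum v) : ¬ G.IsInput v := by
  rintro ⟨j, f, h⟩
  simp [IsSum, h] at hv

theorem IsProd.not_isInput {v : Fin G.n} (hv : G.IsProd v) : ¬ G.IsInput v := by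
  rintro ⟨j, f, h⟩
  simp [IsProd, h] at hv

theorem IsProd.not_isSum {v : Fin G.n} (hv : G.IsProd v) : ¬ G.IsSum v :=
  fun hs => nomatch hv.symm.trans hs

theorem Alternating.isSum_iff_isProd (halt : G.Alternating) {p c : Fin G.n} (h : G.edge p c) :
    G.IsSum p ↔ G.IsProd c := by
  obtain ⟨hsum, hprod, hp⟩ := halt p c h
  refine ⟨hsum, fun hc => ?_⟩
  cases hk : G.kind p with
  | input j f => exact absurd ⟨j, f, hk⟩ hp
  | sum => exact hk
  | prod =>
    rcases hprod hk with hc' | hc'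
    · exact absurd hc' hc.not_isSum
    · exact absurd hc' hc.not_isInput

theorem ScopeFun.eq_biUnion_children (hscope : G.ScopeFun scope) {v : Fin G.n}
    (hv : ¬ G.IsInput v) : scope v = (G.children v).biUnion scope := by
  rw [hscope v]
  cases hk : G.kind v with
  | input j f => exact absurd ⟨j, f, hk⟩ hv
  | sum | prod => rfl

theorem ScopeFun.subset_of_edge (hscope : G.ScopeFun scope) (halt : G.Alternating)
    {p c : Fin G.n} (h : G.edge p c) : scope c ⊆ scope p := by
  rw [hscope.eq_biUnion_children (halt p c h).2.2]
  exact subset_biUnion_of_mem scope (mem_children.2 h)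

theorem ScopeFun.isInputOn_iff (hscope : G.ScopeFun scope) {v : Fin G.n} {i : Fin d} :
    G.IsInputOn v i ↔ i ∈ scope v ∧ G.IsInput v := by
  constructor
  · rintro ⟨f, hf⟩
    refine ⟨?_, i, f, hf⟩
    rw [hscope v, hf]
    exact mem_singleton_self i
  · rintro ⟨hi, j, f, hf⟩
    rw [hscope v, hf, mem_singleton] at hi
    exact hi ▸ ⟨f, hf⟩

theorem Smooth.mem_scope_of_mem_children (hscope : G.ScopeFun scope) (hsm : G.Smooth scope)
    {v c : Fin G.n} {i : Fin d} (hv : G.IsSum v) (hi : i ∈ scope v) (hc : c ∈ G.children v) :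
    i ∈ scope c := by
  rw [hscope.eq_biUnion_children hv.not_isInput] at hi
  obtain ⟨c₀, hc₀, hi₀⟩ := mem_biUnion.1 hi
  rwa [hsm v hv c hc c₀ hc₀]

theorem Decomposable.exists_children_filter_eq_singleton (hscope : G.ScopeFun scope)
    (hdec : G.Decomposable scope) {v : Fin G.n} {i : Fin d} (hv : G.IsProd v)
    (hi : i ∈ scope v) : ∃ c₀, {c ∈ G.children v | i ∈ scope c} = {c₀} := by
  rw [hscope.eq_biUnion_children hv.not_isInput] at hi
  obtain ⟨c₀, hc₀, hi₀⟩ := mem_biUnion.1 hi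
  refine ⟨c₀, eq_singleton_iff_unique_mem.2 ⟨mem_filter.2 ⟨hc₀, hi₀⟩, ?_⟩⟩
  intro c hc
  obtain ⟨hc, hic⟩ := mem_filter.1 hc
  by_contra hne
  exact disjoint_left.1 (hdec v hv c hc c₀ hc₀ hne) hic hi₀

noncomputable def flow (G : PCDag d C) (fw bk : Fin G.n → ℝ) (p c : Fin G.n) : ℝ :=
  if G.edge p c then (if G.IsSum p then G.θ p c * fw c / fw p * bk p else bk p) else 0

variable {fw bk : Fin G.n → ℝ} {i : Fin d}

theorem sum_flow_out {w : Fin d → Fin C → ℝ} (hscope : G.ScopeFun scope) (hfw : G.FwFun w fw)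
    (hsm : G.Smooth scope) (hdec : G.Decomposable scope) (halt : G.Alternating)
    {v : Fin G.n} (hv : i ∈ scope v) (hv₀ : fw v ≠ 0) :
    ∑ c with i ∈ scope c, G.flow fw bk v c = if G.IsInput v then 0 else bk v := by
  have hsub : ∑ c with i ∈ scope c, G.flow fw bk v c =
      ∑ c ∈ G.children v with i ∈ scope c,
        (if G.IsSum v then G.θ v c * fw c / fw v * bk v else bk v) := by
    simp only [flow, ← sum_filter, filter_filter, children, and_comm]
  rw [hsub]
  cases hk : G.kind v with
  | input j f =>
    have hvi : G.IsInput v := ⟨j, f, hk⟩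
    have hleaf : G.children v = ∅ :=
      eq_empty_of_forall_notMem fun c hc => (halt v c (mem_children.1 hc)).2.2 hvi
    simp [hleaf, hvi]
  | sum =>
    have hvs : G.IsSum v := hk
    have hfwv : fw v = ∑ c ∈ G.children v, G.θ v c * fw c := by rw [hfw v, hk]
    rw [filter_true_of_mem fun c hc => hsm.mem_scope_of_mem_children hscope hvs hv hc,
      if_neg hvs.not_isInput]
    simp only [if_pos hvs]
    rw [← sum_mul, ← sum_div, ← hfwv, div_self hv₀, one_mul]
  | prod =>
    have hvp : G.IsProd v := hk
    obtain ⟨c₀, hc₀⟩ := hdec.exists_children_filter_eq_singleton hscope hvp hv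
    rw [hc₀, sum_singleton, if_neg hvp.not_isInput, if_neg hvp.not_isSum]

theorem sum_flow_in (hscope : G.ScopeFun scope) (hbk : G.BkFun fw bk) (halt : G.Alternating)
    (hrootTop : ∀ p, ¬ G.edge p G.root) {c : Fin G.n} (hc : i ∈ scope c) :
    ∑ p with i ∈ scope p, G.flow fw bk p c = if c = G.root then 0 else bk c := by
  have hsub : ∑ p with i ∈ scope p, G.flow fw bk p c =
      ∑ p ∈ G.parents c, (if G.IsProd c then G.θ p c * fw c / fw p * bk p else bk p) := by
    calc ∑ p with i ∈ scope p, G.flow fw bk p c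
        = ∑ p ∈ G.parents c with i ∈ scope p,
            (if G.IsSum p then G.θ p c * fw c / fw p * bk p else bk p) := by
          simp only [flow, ← sum_filter, filter_filter, parents, and_comm]
      _ = _ := by
          rw [filter_true_of_mem fun p hp => hscope.subset_of_edge halt (mem_parents.1 hp) hc]
          exact sum_congr rfl fun p hp => by rw [halt.isSum_iff_isProd (mem_parents.1 hp)]
  rw [hsub]
  by_cases hroot : c = G.root
  · have hsource : G.parents c = ∅ :=
      eq_empty_of_forall_notMem fun p hp => hrootTop p (hroot ▸ mem_parents.1 hp)
    rw [hsource, sum_empty, if_pos hroot]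
  · rw [if_neg hroot, hbk c, if_neg hroot]
    cases hk : G.kind c <;> simp [IsProd, hk]

end PCDag

theorem backward_flow_conservation_general {d C : ℕ} (G : PCDag d C)
    (w : Fin d → Fin C → ℝ)
    (scope : Fin G.n → Finset (Fin d)) (hscope : G.ScopeFun scope)
    (fw : Fin G.n → ℝ) (hfw : G.FwFun w fw)
    (bk : Fin G.n → ℝ) (hbk : G.BkFun fw bk)
    (hsm : G.Smooth scope) (hdec : G.Decomposable scope)
    (halt : G.Alternating)
    (hpos : ∀ v, 0 < fw v)
    (hrootTop : ∀ p, ¬ G.edge p G.root)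
    (i : Fin d) (hi : i ∈ scope G.root) :
    ∑ v ∈ Finset.univ.filter (fun v => G.IsInputOn v i), bk v = 1 := by
  calc ∑ v with G.IsInputOn v i, bk v
      = ∑ v ∈ {v | i ∈ scope v} with G.IsInput v, bk v := by
        simp only [filter_filter, hscope.isInputOn_iff]
    _ = bk G.root :=
        sum_filter_eq_of_conservation _ (G.flow fw bk) bk G.IsInput G.root (by simpa using hi)
          (fun v hv =>
            PCDag.sum_flow_out hscope hfw hsm hdec halt (mem_filter.1 hv).2 (hpos v).ne')
          (fun c hc => PCDag.sum_flow_in hscope hbk halt hrootTop (mem_filter.1 hc).2)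
    _ = 1 := by simpa using hbk G.root

/-- **Backward-pass flow conservation**: in a smooth, decomposable, alternating PC with
convex sum weights and strictly positive forward values, the backward pass (restricted to
the sub-DAG of nodes whose scope contains a fixed variable `X i`; by smoothness and
decomposability all parents of such nodes automatically lie in this sub-DAG, so the global
recurrences agree with the sub-DAG ones) satisfies: the sum of backward values over all
input nodes whose variable is `X i` equals 1. -/
theorem backward_flow_conservation {d C : ℕ} (G : PCDag d C)
    (w : Fin d → Fin C → ℝ)
    (scope : Fin G.n → Finset (Fin d)) (hscope : G.ScopeFun scope)
    (fw : Fin G.n → ℝ) (hfw : G.FwFun w fw)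
    (bk : Fin G.n → ℝ) (hbk : G.BkFun fw bk)
    (hsm : G.Smooth scope) (hdec : G.Decomposable scope)
    (halt : G.Alternating) (hθ : G.ValidSumWeights)
    (hpos : ∀ v, 0 < fw v)
    (hne : G.InternalNonempty)
    (hrootTop : ∀ p, ¬ G.edge p G.root)
    (i : Fin d) (hi : i ∈ scope G.root) :
    ∑ v ∈ Finset.univ.filter (fun v => G.IsInputOn v i), bk v = 1 :=
  backward_flow_conservation_general G w scope hscope fw hfw bk hbk hsm hdec halt hpos hrootTop i hi
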